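/- arXiv:2007.09664 — 8 statements merged into one kernel-verified Lean document; each statement's English description precedes it below -/
import Mathlib

section
/- Let α be an even positive integer. Then (α+1)·C(α, α/2) = Σ over nonnegative integers i₁,i₂,i₃ with i₁+i₂+i₃ = α/2 of C(2i₁,i₁)·C(2i₂,i₂)·C(2i₃,i₃), where C denotes the binomial coefficient. -/
open Finset

private def c (n : ℕ) : ℕ := Nat.choose (2 * n) n

private lemma c_succ_mul (n : ℕ) : (n + 1) * c (n + 1) = 2 * (2 * n + 1) * c n := by
  have := Nat.succ_mul_centralBinom_succ n
  simpa [c, Nat.centralBinom] using this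

private lemma weighted (n : ℕ) : 2 * (∑ i ∈ range (n + 1), i * (c i * c (n - i)))
    = n * ∑ i ∈ range (n + 1), c i * c (n - i) := by
  have hrefl : ∑ i ∈ range (n + 1), i * (c i * c (n - i))
      = ∑ i ∈ range (n + 1), (n - i) * (c (n - i) * c i) := by
    rw [← Finset.sum_range_reflect]
    apply Finset.sum_congr rfl
    intro i hi
    have hi' : i ≤ n := Nat.lt_succ_iff.mp (Finset.mem_range.mp hi)
    simp [Nat.sub_sub_self hi']
  rw [two_mul]
  nth_rewrite 2 [hrefl]
  rw [← Finset.sum_add_distrib, Finset.mul_sum]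
  apply Finset.sum_congr rfl
  intro i hi
  have hi' : i ≤ n := Nat.lt_succ_iff.mp (Finset.mem_range.mp hi)
  obtain ⟨k, rfl⟩ : ∃ k, n = i + k := ⟨n - i, by omega⟩
  simp only [Nat.add_sub_cancel_left]
  ring

private lemma conv_eq_four_pow (m : ℕ) :
    ∑ i ∈ range (m + 1), c i * c (m - i) = 4 ^ m := by
  induction m with
  | zero => simp [c]
  | succ m ih =>
    have hW : ∑ i ∈ range (m + 2), i * (c i * c (m + 1 - i))
        = (2 * m + 2) * ∑ i ∈ range (m + 1), c i * c (m - i) := by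
      rw [Finset.sum_range_succ']
      simp only [Nat.zero_mul, add_zero]
      have hstep : ∀ k ∈ range (m + 1), (k + 1) * (c (k + 1) * c (m + 1 - (k + 1)))
          = 4 * (k * (c k * c (m - k))) + 2 * (c k * c (m - k)) := by
        intro k hk
        have h : m + 1 - (k + 1) = m - k := by omega
        rw [h, ← mul_assoc, c_succ_mul k]
        ring
      rw [Finset.sum_congr rfl hstep, Finset.sum_add_distrib, ← Finset.mul_sum,
        ← Finset.mul_sum]
      have h4 : (4 : ℕ) * ∑ i ∈ range (m + 1), i * (c i * c (m - i))
          = 2 * (m * ∑ i ∈ range (m + 1), c i * c (m - i)) := by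
        rw [← weighted m]; ring
      rw [h4]; ring
    have h1 := weighted (m + 1)
    rw [hW, ih] at h1
    have h2 : (m + 1) * (∑ i ∈ range (m + 2), c i * c (m + 1 - i)) = (m + 1) * 4 ^ (m + 1) := by
      rw [← h1]; ring
    exact Nat.eq_of_mul_eq_mul_left (by omega) h2

private lemma sum_four_pow_c (m : ℕ) :
    ∑ k ∈ range (m + 1), c k * 4 ^ (m - k) = (2 * m + 1) * c m := by
  induction m with
  | zero => simp [c]
  | succ m ih =>
    rw [Finset.sum_range_succ]
    have hshift : ∑ k ∈ range (m + 1), c k * 4 ^ (m + 1 - k)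
        = 4 * ∑ k ∈ range (m + 1), c k * 4 ^ (m - k) := by
      rw [Finset.mul_sum]
      apply Finset.sum_congr rfl
      intro k hk
      have hk' : k ≤ m := Nat.lt_succ_iff.mp (Finset.mem_range.mp hk)
      have : m + 1 - k = (m - k) + 1 := by omega
      rw [this, pow_succ]; ring
    rw [hshift, ih]
    -- goal: 4 * ((2m+1) * c m) + c (m+1) * 4^0 = (2(m+1)+1) * c (m+1)
    have key : (m + 1) * (4 * ((2 * m + 1) * c m) + c (m + 1) * 4 ^ (m + 1 - (m + 1)))
        = (m + 1) * ((2 * (m + 1) + 1) * c (m + 1)) := by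
      have h := c_succ_mul m
      simp only [Nat.sub_self, pow_zero, mul_one]
      nlinarith [h]
    exact Nat.eq_of_mul_eq_mul_left (by omega) key

private lemma tuple_sum_eq (m : ℕ) (f : ℕ → ℕ → ℕ → ℕ) :
    ∑ p ∈ Finset.Nat.antidiagonalTuple 3 m, f (p 0) (p 1) (p 2)
      = ∑ x ∈ (range (m + 1)).sigma (fun a => range (m - a + 1)), f x.1 x.2 (m - x.1 - x.2) := by
  apply Finset.sum_nbij' (i := fun p => (⟨p 0, p 1⟩ : Σ _ : ℕ, ℕ))
    (j := fun x => ![x.1, x.2, m - x.1 - x.2])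
  · intro p hp
    have := (Finset.Nat.mem_antidiagonalTuple.mp hp)
    rw [Fin.sum_univ_three] at this
    simp only [Finset.mem_sigma, Finset.mem_range]
    omega
  · intro x hx
    simp only [Finset.mem_sigma, Finset.mem_range] at hx
    rw [Finset.Nat.mem_antidiagonalTuple, Fin.sum_univ_three]
    simp only [Matrix.cons_val_zero, Matrix.cons_val_one, Matrix.head_cons,
      Matrix.cons_val_two, Matrix.tail_cons]
    omega
  · intro p hp
    have := (Finset.Nat.mem_antidiagonalTuple.mp hp)
    rw [Fin.sum_univ_three] at this
    funext i
    fin_cases i <;> simp <;> omega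
  · intro x hx
    rfl
  · intro p hp
    have := (Finset.Nat.mem_antidiagonalTuple.mp hp)
    rw [Fin.sum_univ_three] at this
    simp only [Matrix.cons_val_zero, Matrix.cons_val_one, Matrix.head_cons,
      Matrix.cons_val_two, Matrix.tail_cons]
    congr 1
    omega

/-- For an even positive integer `α = 2*m`, we have
`(α+1)·C(α, α/2) = Σ_{i₁+i₂+i₃ = α/2} C(2i₁,i₁)·C(2i₂,i₂)·C(2i₃,i₃)`. -/
theorem sum_binom_identity (m : ℕ) (hm : 0 < m) :
    (2 * m + 1) * Nat.choose (2 * m) m =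
      ∑ p ∈ Finset.Nat.antidiagonalTuple 3 m,
        Nat.choose (2 * p 0) (p 0) * Nat.choose (2 * p 1) (p 1) *
          Nat.choose (2 * p 2) (p 2) := by
  have h := tuple_sum_eq m (fun a b d => c a * c b * c d)
  show (2 * m + 1) * c m = ∑ p ∈ Finset.Nat.antidiagonalTuple 3 m, c (p 0) * c (p 1) * c (p 2)
  rw [h, Finset.sum_sigma]
  have hinner : ∀ a ∈ range (m + 1),
      ∑ b ∈ range (m - a + 1), c a * c b * c (m - a - b) = c a * 4 ^ (m - a) := by
    intro a ha
    rw [← conv_eq_four_pow (m - a), Finset.mul_sum]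
    apply Finset.sum_congr rfl
    intro b hb
    rw [mul_assoc]
  calc (2 * m + 1) * c m = ∑ k ∈ range (m + 1), c k * 4 ^ (m - k) := (sum_four_pow_c m).symm
    _ = ∑ a ∈ range (m + 1), ∑ b ∈ range (m - a + 1), c a * c b * c (m - a - b) :=
        (Finset.sum_congr rfl hinner).symm
end

section
/- For every integer k ≥ 1, Σ_{j=0}^{k-1} cos^k(2πj/k) equals k/2^{k-1} if k is odd, and (1/2^k)·(k·C(k, k/2) + 2k) if k is even. -/
open Finset Complex

lemma dvd_char' (k m : ℕ) (hk : 1 ≤ k) (hm : m ≤ k) :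
    ((k:ℤ) ∣ 2*(m:ℤ) - k) ↔ (m = 0 ∨ m = k ∨ 2*m = k) := by
  constructor
  · rintro ⟨c, hc⟩
    have hk' : (0:ℤ) < k := by exact_mod_cast hk
    have h1 : -(k:ℤ) ≤ (k:ℤ) * c := by omega
    have h2 : (k:ℤ) * c ≤ k := by omega
    have hc1 : -1 ≤ c := by nlinarith
    have hc2 : c ≤ 1 := by nlinarith
    interval_cases c <;> omega
  · rintro (rfl | rfl | h)
    · exact ⟨-1, by ring⟩
    · exact ⟨1, by ring⟩
    · exact ⟨0, by omega⟩

lemma sum_cos_pow_complex (k : ℕ) (hk : 1 ≤ k) :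
    (∑ j ∈ Finset.range k, ((Real.cos (2 * Real.pi * j / k)) : ℂ) ^ k) =
      (1/2^k) * ∑ m ∈ Finset.range (k+1),
        (Nat.choose k m : ℂ) * (if (k:ℤ) ∣ 2*(m:ℤ) - k then (k:ℂ) else 0) := by
  have hk0 : (k:ℂ) ≠ 0 := Nat.cast_ne_zero.mpr (by omega)
  set ζ : ℂ := Complex.exp (2 * Real.pi * Complex.I / k) with hζ
  have hprim : IsPrimitiveRoot ζ k := Complex.isPrimitiveRoot_exp k (by omega)
  have hζk : ζ ^ k = 1 := hprim.pow_eq_one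
  have hζ0 : ζ ≠ 0 := Complex.exp_ne_zero _
  have step1 : ∀ j ∈ Finset.range k, ((Real.cos (2 * Real.pi * j / k)) : ℂ) ^ k =
      (1/2^k) * ∑ m ∈ Finset.range (k+1),
        (Nat.choose k m : ℂ) * (ζ ^ (2*(m:ℤ) - k)) ^ j := by
    intro j hj
    have hx : ((2 * Real.pi * j / k : ℝ) : ℂ) * Complex.I = (j : ℂ) * (2 * Real.pi * Complex.I / k) := by
      push_cast; ring
    have hcos : ((Real.cos (2 * Real.pi * j / k)) : ℂ) = (ζ ^ j + (ζ ^ j)⁻¹) / 2 := by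
      rw [Complex.ofReal_cos, Complex.cos, neg_mul, Complex.exp_neg, hx,
        Complex.exp_nat_mul, ← hζ]
    rw [hcos, div_pow, add_pow]
    rw [Finset.sum_div, Finset.mul_sum]
    refine Finset.sum_congr rfl fun m hm => ?_
    have hmk : m ≤ k := by simpa using Nat.lt_succ_iff.mp (Finset.mem_range.mp hm)
    have hterm : (ζ ^ j) ^ m * (ζ ^ j)⁻¹ ^ (k - m) = (ζ ^ (2*(m:ℤ) - k)) ^ j := by
      rw [← zpow_natCast (ζ ^ j) m, ← zpow_natCast ((ζ^j)⁻¹) (k-m), inv_zpow, ← zpow_neg,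
        ← zpow_add₀ (pow_ne_zero _ hζ0), ← zpow_natCast ζ j, ← zpow_mul,
        ← zpow_natCast (ζ ^ (2*(m:ℤ) - k)) j, ← zpow_mul]
      congr 1
      push_cast [hmk]
      ring
    rw [hterm]
    ring
  rw [Finset.sum_congr rfl step1, ← Finset.mul_sum, Finset.sum_comm]
  congr 1
  refine Finset.sum_congr rfl fun m hm => ?_
  rw [← Finset.mul_sum]
  congr 1
  by_cases hd : (k:ℤ) ∣ 2*(m:ℤ) - k
  · rw [if_pos hd]
    have h1 : ζ ^ (2*(m:ℤ) - k) = 1 := (hprim.zpow_eq_one_iff_dvd _).mpr hd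
    simp [h1]
  · rw [if_neg hd]
    have h1 : ζ ^ (2*(m:ℤ) - k) ≠ 1 := fun h => hd ((hprim.zpow_eq_one_iff_dvd _).mp h)
    rw [geom_sum_eq h1]
    have hpow : (ζ ^ (2*(m:ℤ) - k)) ^ k = 1 := by
      rw [← zpow_natCast, ← zpow_mul, mul_comm, zpow_mul, zpow_natCast, hζk, one_zpow]
    rw [hpow]
    simp

/-- For `k ≥ 1`, `Σ_{j=0}^{k-1} cos^k(2πj/k)` equals `k/2^(k-1)` if `k` is odd,
and `(1/2^k)·(k·C(k,k/2) + 2k)` if `k` is even. -/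
theorem sum_cos_pow_self (k : ℕ) (hk : 1 ≤ k) :
    ∑ j ∈ Finset.range k, (Real.cos (2 * Real.pi * j / k)) ^ k =
      if Odd k then (k : ℝ) / 2 ^ (k - 1)
      else (1 / 2 ^ k) * ((k : ℝ) * Nat.choose k (k / 2) + 2 * k) := by
  have key := sum_cos_pow_complex k hk
  -- evaluate the m-sum
  have hfilter : ∑ m ∈ Finset.range (k+1),
      (Nat.choose k m : ℂ) * (if (k:ℤ) ∣ 2*(m:ℤ) - k then (k:ℂ) else 0) =
      ∑ m ∈ (Finset.range (k+1)).filter (fun (m : ℕ) => (k:ℤ) ∣ 2*(m:ℤ) - k),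
        (Nat.choose k m : ℂ) * k := by
    rw [Finset.sum_filter]
    refine Finset.sum_congr rfl fun m hm => ?_
    split_ifs <;> simp
  have hset : (Finset.range (k+1)).filter (fun (m : ℕ) => (k:ℤ) ∣ 2*(m:ℤ) - k) =
      if Odd k then {0, k} else {0, k/2, k} := by
    ext m
    simp only [Finset.mem_filter, Finset.mem_range, Nat.lt_succ_iff]
    constructor
    · rintro ⟨hmk, hd⟩
      rcases (dvd_char' k m hk hmk).mp hd with rfl | rfl | h2
      · split_ifs <;> simp
      · split_ifs <;> simp
      · have hkodd : ¬ Odd k := by simp [Nat.even_iff, Nat.odd_iff]; omega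
        rw [if_neg hkodd]
        simp only [Finset.mem_insert, Finset.mem_singleton]
        right; left; omega
    · intro hmem
      split_ifs at hmem with ho
      · simp only [Finset.mem_insert, Finset.mem_singleton] at hmem
        exact ⟨by omega, (dvd_char' k m hk (by omega)).mpr (by omega)⟩
      · have hke : Even k := Nat.not_odd_iff_even.mp ho
        obtain ⟨r, hr⟩ := hke
        simp only [Finset.mem_insert, Finset.mem_singleton] at hmem
        exact ⟨by omega, (dvd_char' k m hk (by omega)).mpr (by omega)⟩
  rw [hfilter, hset] at key
  have cast_sum : ((∑ j ∈ Finset.range k, (Real.cos (2 * Real.pi * j / k)) ^ k : ℝ) : ℂ) =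
      ∑ j ∈ Finset.range k, ((Real.cos (2 * Real.pi * j / k)) : ℂ) ^ k := by
    push_cast; rfl
  rw [← Complex.ofReal_inj, cast_sum, key]
  by_cases ho : Odd k
  · rw [if_pos ho, if_pos ho]
    have h0k : (0:ℕ) ≠ k := by omega
    rw [Finset.sum_pair h0k]
    simp only [Nat.choose_zero_right, Nat.choose_self, Nat.cast_one, one_mul]
    rw [show (2:ℂ)^k = 2^(k-1)*2 from by rw [← pow_succ]; congr 1; omega]
    push_cast
    have h2 : ((2:ℂ)^(k-1)) ≠ 0 := pow_ne_zero _ two_ne_zero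
    field_simp
    ring
  · rw [if_neg ho, if_neg ho]
    have hke : Even k := Nat.not_odd_iff_even.mp ho
    have hk2 : 2 ≤ k := by
      rcases hke with ⟨r, hr⟩; omega
    have h1 : (0:ℕ) ∉ ({k/2, k} : Finset ℕ) := by
      simp only [Finset.mem_insert, Finset.mem_singleton]
      push_neg
      omega
    have h2 : k/2 ≠ k := by omega
    rw [Finset.sum_insert h1, Finset.sum_pair h2]
    simp only [Nat.choose_zero_right, Nat.choose_self, Nat.cast_one, one_mul]
    push_cast
    ring
end

section
/- For every integer k ≥ 3, Σ_{j=0}^{k-1} cos^{k-2}(2πj/k) equals 0 if k is odd, and (k/2^{k-2})·C(k-2, k/2 - 1) if k is even. -/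
open Complex Finset

/-- Sum of `k`-th roots of unity raised to a power `n`. -/
lemma sum_exp_root (k : ℕ) (hk : 0 < k) (n : ℤ) :
    ∑ j ∈ Finset.range k, Complex.exp (2 * Real.pi * Complex.I * n * j / k) =
      if (k : ℤ) ∣ n then (k : ℂ) else 0 := by
  have hkC : (k : ℂ) ≠ 0 := Nat.cast_ne_zero.mpr hk.ne'
  have h2 : (2 : ℂ) * Real.pi * Complex.I ≠ 0 := by
    simp [Real.pi_ne_zero, Complex.I_ne_zero]
  have hterm : ∀ j : ℕ,
      Complex.exp (2 * Real.pi * Complex.I * n * j / k) =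
        Complex.exp (2 * Real.pi * Complex.I * n / k) ^ j := by
    intro j
    rw [← Complex.exp_nat_mul]
    ring_nf
  simp only [hterm]
  by_cases h : (k : ℤ) ∣ n
  · rw [if_pos h]
    obtain ⟨c, rfl⟩ := h
    have h1 : Complex.exp (2 * Real.pi * Complex.I * (((k : ℤ) * c : ℤ) : ℂ) / k) = 1 := by
      have he : (2 * Real.pi * Complex.I * (((k : ℤ) * c : ℤ) : ℂ) / k)
          = (c : ℤ) * (2 * Real.pi * Complex.I) := by
        push_cast
        field_simp
      rw [he, Complex.exp_int_mul_two_pi_mul_I]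
    push_cast at h1 ⊢
    simp [h1]
  · rw [if_neg h]
    have hne : Complex.exp (2 * Real.pi * Complex.I * n / k) ≠ 1 := by
      intro hone
      rw [Complex.exp_eq_one_iff] at hone
      obtain ⟨m, hm⟩ := hone
      apply h
      refine ⟨m, ?_⟩
      rw [div_eq_iff hkC] at hm
      have hm2 : (2 * Real.pi * Complex.I) * n = (2 * Real.pi * Complex.I) * ((k : ℂ) * m) := by
        linear_combination hm
      have := mul_left_cancel₀ h2 hm2
      exact_mod_cast this
    rw [geom_sum_eq hne]
    have hpow : Complex.exp (2 * Real.pi * Complex.I * n / k) ^ k = 1 := by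
      rw [← Complex.exp_nat_mul]
      have he : (k : ℂ) * (2 * Real.pi * Complex.I * n / k)
          = (n : ℤ) * (2 * Real.pi * Complex.I) := by
        field_simp
      rw [he, Complex.exp_int_mul_two_pi_mul_I]
    rw [hpow]
    simp

/-- For `k ≥ 3`, `Σ_{j=0}^{k-1} cos^(k-2)(2πj/k)` equals `0` if `k` is odd,
and `(k/2^(k-2))·C(k-2, k/2 - 1)` if `k` is even. -/
theorem sum_cos_pow_sub_two (k : ℕ) (hk : 3 ≤ k) :
    ∑ j ∈ Finset.range k, (Real.cos (2 * Real.pi * j / k)) ^ (k - 2) =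
      if Odd k then 0
      else ((k : ℝ) / 2 ^ (k - 2)) * Nat.choose (k - 2) (k / 2 - 1) := by
  have hk0 : 0 < k := by omega
  set N := k - 2 with hN
  have hNk : (N : ℤ) = (k : ℤ) - 2 := by omega
  have key : ∑ j ∈ Finset.range k, (Complex.cos (2 * Real.pi * j / k)) ^ N
      = ∑ m ∈ Finset.range (N + 1), ((N.choose m : ℂ) / 2 ^ N) *
          (if (k : ℤ) ∣ (2 * (m : ℤ) - N) then (k : ℂ) else 0) := by
    have hcos : ∀ j ∈ Finset.range k, (Complex.cos (2 * Real.pi * j / k)) ^ N =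
        ∑ m ∈ Finset.range (N + 1), ((N.choose m : ℂ) / 2 ^ N) *
          Complex.exp (2 * Real.pi * Complex.I * ((2 * (m : ℤ) - N : ℤ) : ℂ) * j / k) := by
      intro j _
      have hc : Complex.cos (2 * Real.pi * j / k) =
          (Complex.exp ((2 * Real.pi * j / k) * Complex.I)
            + Complex.exp (-(2 * Real.pi * j / k) * Complex.I)) / 2 := by
        rw [eq_div_iff (two_ne_zero), mul_comm, Complex.two_cos]
      rw [hc, div_pow, add_pow, Finset.sum_div]
      refine Finset.sum_congr rfl fun m hm => ?_
      have hmN : m ≤ N := Nat.lt_succ_iff.mp (Finset.mem_range.mp hm)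
      rw [← Complex.exp_nat_mul, ← Complex.exp_nat_mul, ← Complex.exp_add]
      have hexp : (m : ℂ) * ((2 * Real.pi * j / k) * Complex.I)
          + ((N - m : ℕ) : ℂ) * (-(2 * Real.pi * j / k) * Complex.I)
          = 2 * Real.pi * Complex.I * ((2 * (m : ℤ) - N : ℤ) : ℂ) * j / k := by
        push_cast [Nat.cast_sub hmN]
        ring
      rw [hexp]
      ring
    rw [Finset.sum_congr rfl hcos, Finset.sum_comm]
    refine Finset.sum_congr rfl fun m _ => ?_
    rw [← Finset.mul_sum, sum_exp_root k hk0 (2 * (m : ℤ) - N)]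
  -- transfer to ℝ
  apply Complex.ofReal_injective
  have hreal : ((∑ j ∈ Finset.range k, (Real.cos (2 * Real.pi * j / k)) ^ N : ℝ) : ℂ)
      = ∑ j ∈ Finset.range k, (Complex.cos (2 * Real.pi * j / k)) ^ N := by
    push_cast [Complex.ofReal_cos]
    norm_num
  rw [hreal, key]
  by_cases hodd : Odd k
  · rw [if_pos hodd]
    obtain ⟨c, hc⟩ := hodd
    rw [Finset.sum_eq_zero]
    · simp
    intro m hm
    have hmN : m ≤ N := Nat.lt_succ_iff.mp (Finset.mem_range.mp hm)
    have hnd : ¬ ((k : ℤ) ∣ (2 * (m : ℤ) - N)) := by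
      intro hdvd
      have h0 : (2 * (m : ℤ) - N) = 0 := by
        refine Int.eq_zero_of_abs_lt_dvd hdvd ?_
        rw [abs_lt]
        constructor <;> omega
      omega
    rw [if_neg hnd, mul_zero]
  · rw [if_neg hodd]
    have hkeven : k % 2 = 0 := Nat.even_iff.mp (Nat.not_odd_iff_even.mp hodd)
    rw [Finset.sum_eq_single (k / 2 - 1)]
    · have hd : (k : ℤ) ∣ (2 * ((k / 2 - 1 : ℕ) : ℤ) - N) := by
        have : (2 * ((k / 2 - 1 : ℕ) : ℤ) - N) = 0 := by omega
        simp [this]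
      rw [if_pos hd]
      push_cast
      ring
    · intro m hm hne
      have hmN : m ≤ N := Nat.lt_succ_iff.mp (Finset.mem_range.mp hm)
      have hnd : ¬ ((k : ℤ) ∣ (2 * (m : ℤ) - N)) := by
        intro hdvd
        have h0 : (2 * (m : ℤ) - N) = 0 := by
          refine Int.eq_zero_of_abs_lt_dvd hdvd ?_
          rw [abs_lt]
          constructor <;> omega
        have : m = k / 2 - 1 := by omega
        exact hne this
      rw [if_neg hnd, mul_zero]
    · intro hnot
      exact absurd (Finset.mem_range.mpr (by omega)) hnot
end

section
/- For every integer k ≥ 3, the double sum Σ_{j₁=0}^{k-1} Σ_{j₂=0}^{k-1} cos^{k-1}(2π(j₁-j₂)/k) · sin(2πj₁/k) · cos(2πj₂/k) equals 0. -/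
open Real Finset

private lemma cos_int_congr (k : ℕ) (hk : 0 < k) (a b : ℤ) (h : (k : ℤ) ∣ (a - b)) :
    Real.cos (2 * π * (a : ℝ) / k) = Real.cos (2 * π * (b : ℝ) / k) := by
  obtain ⟨t, ht⟩ := h
  have hk' : (k : ℝ) ≠ 0 := by positivity
  have : (2 * π * (a : ℝ) / k) = 2 * π * (b : ℝ) / k + (t : ℤ) * (2 * π) := by
    have ha : (a : ℝ) = (b : ℝ) + (k : ℝ) * (t : ℝ) := by
      have := congrArg (Int.cast : ℤ → ℝ) ht
      push_cast at this ⊢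
      linarith
    rw [ha]; field_simp
  rw [this, Real.cos_add_int_mul_two_pi]

private lemma sin_int_congr (k : ℕ) (hk : 0 < k) (a b : ℤ) (h : (k : ℤ) ∣ (a - b)) :
    Real.sin (2 * π * (a : ℝ) / k) = Real.sin (2 * π * (b : ℝ) / k) := by
  obtain ⟨t, ht⟩ := h
  have hk' : (k : ℝ) ≠ 0 := by positivity
  have : (2 * π * (a : ℝ) / k) = 2 * π * (b : ℝ) / k + (t : ℤ) * (2 * π) := by
    have ha : (a : ℝ) = (b : ℝ) + (k : ℝ) * (t : ℝ) := by
      have := congrArg (Int.cast : ℤ → ℝ) ht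
      push_cast at this ⊢
      linarith
    rw [ha]; field_simp
  rw [this, Real.sin_add_int_mul_two_pi]

/-- For `k ≥ 3`, the double sum
`Σ_{j₁,j₂=0}^{k-1} cos^(k-1)(2π(j₁-j₂)/k) · sin(2πj₁/k) · cos(2πj₂/k)` vanishes. -/
theorem double_sum_cos_sin_eq_zero (k : ℕ) (hk : 3 ≤ k) :
    ∑ j₁ ∈ Finset.range k, ∑ j₂ ∈ Finset.range k,
        (Real.cos (2 * Real.pi * ((j₁ : ℝ) - (j₂ : ℝ)) / k)) ^ (k - 1) *
          Real.sin (2 * Real.pi * j₁ / k) * Real.cos (2 * Real.pi * j₂ / k) = 0 := by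
  have hk0 : 0 < k := by omega
  set f : ℕ → ℕ → ℝ := fun j₁ j₂ =>
      (Real.cos (2 * Real.pi * ((j₁ : ℝ) - (j₂ : ℝ)) / k)) ^ (k - 1) *
        Real.sin (2 * Real.pi * j₁ / k) * Real.cos (2 * Real.pi * j₂ / k) with hf
  set σ : ℕ → ℕ := fun j => (k - j) % k with hσ
  have hσmem : ∀ j ∈ Finset.range k, σ j ∈ Finset.range k := by
    intro j _
    simp [hσ, Nat.mod_lt _ hk0]
  have hσσ : ∀ j ∈ Finset.range k, σ (σ j) = j := by
    intro j hj
    simp only [Finset.mem_range] at hj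
    rcases Nat.eq_zero_or_pos j with h0 | hpos
    · simp [hσ, h0, Nat.mod_self]
    · have h1 : (k - j) % k = k - j := Nat.mod_eq_of_lt (by omega)
      simp only [hσ, h1]
      have h2 : (k - (k - j)) % k = k - (k - j) := Nat.mod_eq_of_lt (by omega)
      rw [h2]; omega
  -- congruence: σ j ≡ -j mod k as integers
  have hdvd : ∀ j, j < k → (k : ℤ) ∣ ((σ j : ℤ) - (-(j : ℤ))) := by
    intro j hj
    rcases Nat.eq_zero_or_pos j with h0 | hpos
    · simp [hσ, h0, Nat.mod_self]
    · have h1 : (k - j) % k = k - j := Nat.mod_eq_of_lt (by omega)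
      simp only [hσ, h1]
      have : ((k - j : ℕ) : ℤ) = (k : ℤ) - j := by
        push_cast [Nat.cast_sub hj.le]; ring
      rw [this]
      exact ⟨1, by ring⟩
  -- term transformation
  have hterm : ∀ j₁ ∈ Finset.range k, ∀ j₂ ∈ Finset.range k,
      f (σ j₁) (σ j₂) = - f j₁ j₂ := by
    intro j₁ hj₁ j₂ hj₂
    simp only [Finset.mem_range] at hj₁ hj₂
    have hsin : Real.sin (2 * Real.pi * (σ j₁ : ℝ) / k) = - Real.sin (2 * Real.pi * j₁ / k) := by
      have := sin_int_congr k hk0 (σ j₁ : ℤ) (-(j₁ : ℤ)) (hdvd j₁ hj₁)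
      push_cast at this
      rw [this]
      rw [show 2 * π * -(j₁ : ℝ) / k = -(2 * π * (j₁ : ℝ) / k) by ring, Real.sin_neg]
    have hcos : Real.cos (2 * Real.pi * (σ j₂ : ℝ) / k) = Real.cos (2 * Real.pi * j₂ / k) := by
      have := cos_int_congr k hk0 (σ j₂ : ℤ) (-(j₂ : ℤ)) (hdvd j₂ hj₂)
      push_cast at this
      rw [this]
      rw [show 2 * π * -(j₂ : ℝ) / k = -(2 * π * (j₂ : ℝ) / k) by ring, Real.cos_neg]
    have hdiff : Real.cos (2 * Real.pi * ((σ j₁ : ℝ) - (σ j₂ : ℝ)) / k)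
        = Real.cos (2 * Real.pi * ((j₁ : ℝ) - (j₂ : ℝ)) / k) := by
      have hd : (k : ℤ) ∣ (((σ j₁ : ℤ) - (σ j₂ : ℤ)) - ((j₂ : ℤ) - (j₁ : ℤ))) := by
        have h1 := hdvd j₁ hj₁
        have h2 := hdvd j₂ hj₂
        have : ((σ j₁ : ℤ) - (σ j₂ : ℤ)) - ((j₂ : ℤ) - (j₁ : ℤ))
            = ((σ j₁ : ℤ) - (-(j₁ : ℤ))) - ((σ j₂ : ℤ) - (-(j₂ : ℤ))) := by ring
        rw [this]
        exact dvd_sub h1 h2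
      have := cos_int_congr k hk0 ((σ j₁ : ℤ) - (σ j₂ : ℤ)) ((j₂ : ℤ) - (j₁ : ℤ)) hd
      push_cast at this
      rw [this]
      rw [show 2 * π * ((j₂ : ℝ) - (j₁ : ℝ)) / k = -(2 * π * ((j₁ : ℝ) - (j₂ : ℝ)) / k) by ring,
        Real.cos_neg]
    simp only [hf, hdiff, hsin, hcos]
    ring
  have hS : (∑ j₁ ∈ Finset.range k, ∑ j₂ ∈ Finset.range k, f j₁ j₂)
      = ∑ j₁ ∈ Finset.range k, ∑ j₂ ∈ Finset.range k, f (σ j₁) (σ j₂) := by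
    rw [Finset.sum_nbij' σ σ hσmem hσmem hσσ hσσ (fun j₁ hj₁ => ?_)]
    exact Finset.sum_nbij' σ σ hσmem hσmem hσσ hσσ (fun j₂ hj₂ => by rw [hσσ _ hj₁, hσσ _ hj₂])
  have hS2 : (∑ j₁ ∈ Finset.range k, ∑ j₂ ∈ Finset.range k, f (σ j₁) (σ j₂))
      = - ∑ j₁ ∈ Finset.range k, ∑ j₂ ∈ Finset.range k, f j₁ j₂ := by
    rw [← Finset.sum_neg_distrib]
    refine Finset.sum_congr rfl fun j₁ hj₁ => ?_
    rw [← Finset.sum_neg_distrib]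
    exact Finset.sum_congr rfl fun j₂ hj₂ => hterm j₁ hj₁ j₂ hj₂
  have : (∑ j₁ ∈ Finset.range k, ∑ j₂ ∈ Finset.range k, f j₁ j₂) = 0 := by
    have := hS.trans hS2
    linarith
  exact this
end

section
/- For every integer k ≥ 3, (1/k)·Σ_{j₁=0}^{k-1} Σ_{j₂=0}^{k-1} cos^{k-1}(2π(j₁-j₂)/k)·cos(2πj₁/k)·cos(2πj₂/k) equals k/2^k if k is odd, and (k/2^{k+1})·(2 + C(k-1, k/2) + C(k-1, k/2 - 1)) if k is even. -/
open Complex Finset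
noncomputable def ze (k : ℕ) (a : ℤ) : ℂ := Complex.exp (2 * Real.pi * I * a / k)

lemma ze_zero (k : ℕ) : ze k 0 = 1 := by simp [ze]

lemma ze_add (k : ℕ) (a b : ℤ) : ze k (a + b) = ze k a * ze k b := by
  rw [ze, ze, ze, ← Complex.exp_add]; push_cast; ring_nf

lemma ze_eq_zpow (k : ℕ) (a : ℤ) : ze k a = (ze k 1) ^ a := by
  rw [ze, ze, ← Complex.exp_int_mul]; ring_nf

lemma ze_pow (k : ℕ) (a : ℤ) (m : ℕ) : (ze k a) ^ m = ze k (a * m) := by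
  rw [ze_eq_zpow k a, ze_eq_zpow k (a * m), ← zpow_natCast ((ze k 1) ^ a) m, ← zpow_mul]

lemma ze_prim (k : ℕ) (hk : 0 < k) : IsPrimitiveRoot (ze k 1) k := by
  have := Complex.isPrimitiveRoot_exp k hk.ne'
  convert this using 2
  unfold ze; push_cast; ring_nf

lemma ze_eq_one_iff (k : ℕ) (hk : 0 < k) (a : ℤ) : ze k a = 1 ↔ (k : ℤ) ∣ a := by
  rw [ze_eq_zpow]; exact (ze_prim k hk).zpow_eq_one_iff_dvd a

lemma ortho (k : ℕ) (hk : 0 < k) (a : ℤ) :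
    ∑ j ∈ Finset.range k, ze k (a * j) = if (k : ℤ) ∣ a then (k : ℂ) else 0 := by
  simp_rw [← ze_pow]
  by_cases h : (k : ℤ) ∣ a
  · rw [if_pos h]
    have : ze k a = 1 := (ze_eq_one_iff k hk a).mpr h
    simp [this]
  · rw [if_neg h]
    have h1 : ze k a ≠ 1 := fun hc => h ((ze_eq_one_iff k hk a).mp hc)
    rw [geom_sum_eq h1]
    have : (ze k a) ^ k = 1 := by
      rw [ze_pow]
      exact (ze_eq_one_iff k hk _).mpr ⟨a, mul_comm a k⟩
    simp [this]

lemma cos_eq_ze (k : ℕ) (a : ℤ) :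
    ((Real.cos (2 * Real.pi * a / k) : ℝ) : ℂ) = (ze k a + ze k (-a)) / 2 := by
  rw [Complex.ofReal_cos]
  have h2 := Complex.two_cos (2 * Real.pi * a / k)
  have ha : ((2 * Real.pi * a / k : ℝ) : ℂ) = 2 * (Real.pi : ℂ) * (a : ℂ) / k := by
    push_cast; ring
  rw [ha]
  have e1 : ze k a = Complex.exp (2 * (Real.pi:ℂ) * a / k * I) := by
    rw [ze]; ring_nf
  have e2 : ze k (-a) = Complex.exp (-(2 * (Real.pi:ℂ) * a / k) * I) := by
    rw [ze]; push_cast; ring_nf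
  rw [e1, e2, ← h2]; ring

/-- filtered cosine sum -/
lemma S1 (k : ℕ) (hk : 0 < k) (a : ℤ) :
    ∑ j ∈ Finset.range k, ze k (a * j) * ((Real.cos (2 * Real.pi * j / k) : ℝ) : ℂ)
      = ((if (k:ℤ) ∣ a + 1 then (k:ℂ) else 0) + (if (k:ℤ) ∣ a - 1 then (k:ℂ) else 0)) / 2 := by
  have key : ∀ j ∈ Finset.range k,
      ze k (a * j) * ((Real.cos (2 * Real.pi * j / k) : ℝ) : ℂ)
        = (ze k ((a+1) * j) + ze k ((a-1) * j)) / 2 := by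
    intro j _
    have : ((j:ℝ) : ℂ) = ((j:ℤ) : ℂ) := by push_cast; ring
    rw [show (2 * Real.pi * j / k : ℝ) = (2 * Real.pi * ((j:ℤ):ℝ) / k : ℝ) by push_cast; ring]
    rw [cos_eq_ze k (j:ℤ)]
    rw [show ((a+1) * j : ℤ) = a * j + j by ring, show ((a-1) * j : ℤ) = a * j + -j by ring,
      ze_add, ze_add]
    ring
  rw [Finset.sum_congr rfl key, ← Finset.sum_div, Finset.sum_add_distrib, ortho k hk, ortho k hk]

/-- cosine power expansion -/
lemma cospow (k n : ℕ) (d : ℤ) :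
    (((Real.cos (2 * Real.pi * d / k)) : ℝ) : ℂ) ^ n
      = (1 / 2 ^ n) * ∑ m ∈ Finset.range (n + 1),
          (Nat.choose n m : ℂ) * ze k (d * (2 * m - n)) := by
  rw [cos_eq_ze, div_pow, add_pow, one_div, inv_mul_eq_div]
  congr 1
  apply Finset.sum_congr rfl
  intro m hm
  have hm' : m ≤ n := Nat.lt_succ_iff.mp (Finset.mem_range.mp hm)
  rw [ze_pow, ze_pow, ← ze_add, mul_comm]
  congr 2
  push_cast [hm']
  ring

lemma keval (k : ℕ) (hk : 3 ≤ k) (m : ℕ) (hm : m < k) :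
    ((if (k:ℤ) ∣ (2*(m:ℤ) - ((k:ℤ)-1)) + 1 then (k:ℂ) else 0)
      + (if (k:ℤ) ∣ (2*(m:ℤ) - ((k:ℤ)-1)) - 1 then (k:ℂ) else 0)) / 2 *
    (((if (k:ℤ) ∣ (-(2*(m:ℤ) - ((k:ℤ)-1))) + 1 then (k:ℂ) else 0)
      + (if (k:ℤ) ∣ (-(2*(m:ℤ) - ((k:ℤ)-1))) - 1 then (k:ℂ) else 0)) / 2)
    = (k:ℂ)^2/4 * (if m = 0 ∨ m = k - 1 ∨ 2*m = k ∨ 2*m + 2 = k then 1 else 0) := by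
  set a : ℤ := 2*(m:ℤ) - ((k:ℤ)-1) with ha
  have e1 : ((k:ℤ) ∣ -a + 1) ↔ ((k:ℤ) ∣ a - 1) := by
    rw [show -a+1 = -(a-1) by ring, dvd_neg]
  have e2 : ((k:ℤ) ∣ -a - 1) ↔ ((k:ℤ) ∣ a + 1) := by
    rw [show -a-1 = -(a+1) by ring, dvd_neg]
  rw [if_congr e1 rfl rfl, if_congr e2 rfl rfl]
  have h1 : ((k:ℤ) ∣ a + 1) ↔ (2*m + 2 = k ∨ m = k - 1) := by
    constructor
    · intro hd
      by_cases hx : a + 1 = (k:ℤ)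
      · right; omega
      · left
        have h0 : a + 1 = 0 := Int.eq_zero_of_abs_lt_dvd hd (abs_lt.mpr ⟨by omega, by omega⟩)
        omega
    · rintro (h | h)
      · exact ⟨0, by omega⟩
      · exact ⟨1, by omega⟩
  have h2 : ((k:ℤ) ∣ a - 1) ↔ (m = 0 ∨ 2*m = k) := by
    constructor
    · intro hd
      by_cases hx : a - 1 = -(k:ℤ)
      · left; omega
      · right
        have h0 : a - 1 = 0 := Int.eq_zero_of_abs_lt_dvd hd (abs_lt.mpr ⟨by omega, by omega⟩)
        omega
    · rintro (h | h)
      · exact ⟨-1, by omega⟩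
      · exact ⟨0, by omega⟩
  by_cases hA : 2*m+2 = k ∨ m = k-1
  · have hB : ¬(m = 0 ∨ 2*m = k) := by omega
    rw [if_pos (h1.mpr hA), if_neg (fun h => hB (h2.mp h)),
      if_pos (by tauto : m = 0 ∨ m = k - 1 ∨ 2*m = k ∨ 2*m + 2 = k)]
    ring
  · by_cases hB : m = 0 ∨ 2*m = k
    · rw [if_neg (fun h => hA (h1.mp h)), if_pos (h2.mpr hB),
        if_pos (by tauto : m = 0 ∨ m = k - 1 ∨ 2*m = k ∨ 2*m + 2 = k)]
      ring
    · rw [if_neg (fun h => hA (h1.mp h)), if_neg (fun h => hB (h2.mp h)),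
        if_neg (by push_neg; omega : ¬(m = 0 ∨ m = k - 1 ∨ 2*m = k ∨ 2*m + 2 = k))]
      ring

lemma sum_ind (k : ℕ) (hk : 3 ≤ k) :
    ∑ m ∈ Finset.range k, (Nat.choose (k-1) m : ℂ) *
        (if m = 0 ∨ m = k - 1 ∨ 2*m = k ∨ 2*m + 2 = k then 1 else 0)
      = if Odd k then 2
        else 2 + (Nat.choose (k-1) (k/2) : ℂ) + (Nat.choose (k-1) (k/2-1) : ℂ) := by
  rcases Nat.even_or_odd k with he | ho
  · rw [if_neg (by simpa using he)]
    have pw : ∀ m ∈ Finset.range k, (Nat.choose (k-1) m : ℂ) *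
        (if m = 0 ∨ m = k - 1 ∨ 2*m = k ∨ 2*m + 2 = k then 1 else 0)
        = (if m = 0 then (Nat.choose (k-1) m : ℂ) else 0)
          + (if m = k - 1 then (Nat.choose (k-1) m : ℂ) else 0)
          + (if m = k/2 then (Nat.choose (k-1) m : ℂ) else 0)
          + (if m = k/2 - 1 then (Nat.choose (k-1) m : ℂ) else 0) := by
      intro m hm
      simp only [Finset.mem_range] at hm
      obtain ⟨t, ht⟩ := he
      split_ifs <;> first | ring1 | (exfalso; omega)
    rw [Finset.sum_congr rfl pw]
    simp only [Finset.sum_add_distrib, Finset.sum_ite_eq']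
    rw [if_pos (by simp; omega), if_pos (by simp; omega), if_pos (by simp; omega),
      if_pos (by simp; omega)]
    rw [Nat.choose_zero_right, Nat.choose_self]
    push_cast
    ring
  · rw [if_pos ho]
    have pw : ∀ m ∈ Finset.range k, (Nat.choose (k-1) m : ℂ) *
        (if m = 0 ∨ m = k - 1 ∨ 2*m = k ∨ 2*m + 2 = k then 1 else 0)
        = (if m = 0 then (Nat.choose (k-1) m : ℂ) else 0)
          + (if m = k - 1 then (Nat.choose (k-1) m : ℂ) else 0) := by
      intro m hm
      simp only [Finset.mem_range] at hm
      obtain ⟨t, ht⟩ := ho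
      split_ifs <;> first | ring1 | (exfalso; omega)
    rw [Finset.sum_congr rfl pw]
    simp only [Finset.sum_add_distrib, Finset.sum_ite_eq']
    rw [if_pos (by simp; omega), if_pos (by simp; omega)]
    rw [Nat.choose_zero_right, Nat.choose_self]
    push_cast
    ring

/-- For `k ≥ 3`,
`(1/k)·Σ_{j₁,j₂} cos^(k-1)(2π(j₁-j₂)/k)·cos(2πj₁/k)·cos(2πj₂/k)` equals
`k/2^k` for odd `k`, and `(k/2^(k+1))·(2 + C(k-1,k/2) + C(k-1,k/2-1))` for even `k`. -/
theorem norm_B3_formula (k : ℕ) (hk : 3 ≤ k) :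
    (1 / (k : ℝ)) * ∑ j₁ ∈ Finset.range k, ∑ j₂ ∈ Finset.range k,
        (Real.cos (2 * Real.pi * ((j₁ : ℝ) - (j₂ : ℝ)) / k)) ^ (k - 1) *
          Real.cos (2 * Real.pi * j₁ / k) * Real.cos (2 * Real.pi * j₂ / k) =
      if Odd k then (k : ℝ) / 2 ^ k
      else ((k : ℝ) / 2 ^ (k + 1)) *
        (2 + (Nat.choose (k - 1) (k / 2) : ℝ) + (Nat.choose (k - 1) (k / 2 - 1) : ℝ)) := by
  have hk0 : 0 < k := by omega
  have hn1 : k - 1 + 1 = k := by omega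
  have main : ((∑ j₁ ∈ Finset.range k, ∑ j₂ ∈ Finset.range k,
      (Real.cos (2 * Real.pi * ((j₁:ℝ) - (j₂:ℝ)) / k)) ^ (k-1) *
        Real.cos (2 * Real.pi * j₁ / k) * Real.cos (2 * Real.pi * j₂ / k) : ℝ) : ℂ)
      = (1/2^(k-1)) * ((k:ℂ)^2/4) *
        (if Odd k then 2
          else 2 + (Nat.choose (k-1) (k/2) : ℂ) + (Nat.choose (k-1) (k/2-1) : ℂ)) := by
    simp only [Complex.ofReal_sum, Complex.ofReal_mul, Complex.ofReal_pow]
    have expand : ∀ j₁ ∈ Finset.range k, ∀ j₂ ∈ Finset.range k,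
        ((Real.cos (2 * Real.pi * ((j₁:ℝ) - (j₂:ℝ)) / k) : ℝ) : ℂ) ^ (k-1) *
          ((Real.cos (2 * Real.pi * (j₁:ℝ) / k) : ℝ) : ℂ) *
          ((Real.cos (2 * Real.pi * (j₂:ℝ) / k) : ℝ) : ℂ)
        = ∑ m ∈ Finset.range (k-1+1), (1/2^(k-1) : ℂ) *
            ((Nat.choose (k-1) m : ℂ)
              * (ze k ((2*(m:ℤ) - (k-1:ℕ)) * j₁) * ((Real.cos (2 * Real.pi * (j₁:ℝ) / k) : ℝ) : ℂ))
              * (ze k (-(2*(m:ℤ) - (k-1:ℕ)) * j₂) * ((Real.cos (2 * Real.pi * (j₂:ℝ) / k) : ℝ) : ℂ))) := by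
      intro j₁ _ j₂ _
      have harg : (2 * Real.pi * ((j₁:ℝ) - (j₂:ℝ)) / k)
          = 2 * Real.pi * ((((j₁:ℤ) - (j₂:ℤ)) : ℤ) : ℝ) / k := by push_cast; ring
      rw [harg, cospow k (k-1) ((j₁:ℤ) - (j₂:ℤ))]
      simp only [Finset.mul_sum, Finset.sum_mul]
      refine Finset.sum_congr rfl fun m hm => ?_
      rw [show ((j₁:ℤ) - (j₂:ℤ)) * (2*(m:ℤ) - ((k-1:ℕ):ℤ))
          = (2*(m:ℤ) - ((k-1:ℕ):ℤ)) * (j₁:ℤ) + (-(2*(m:ℤ) - ((k-1:ℕ):ℤ))) * (j₂:ℤ) by ring,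
        ze_add]
      ring
    rw [Finset.sum_congr rfl (fun j₁ h₁ => Finset.sum_congr rfl (expand j₁ h₁))]
    rw [Finset.sum_congr rfl (fun j₁ _ => Finset.sum_comm), Finset.sum_comm]
    have factor : ∀ m ∈ Finset.range (k-1+1),
        (∑ j₁ ∈ Finset.range k, ∑ j₂ ∈ Finset.range k, (1/2^(k-1) : ℂ) *
            ((Nat.choose (k-1) m : ℂ)
              * (ze k ((2*(m:ℤ) - (k-1:ℕ)) * j₁) * ((Real.cos (2 * Real.pi * (j₁:ℝ) / k) : ℝ) : ℂ))
              * (ze k (-(2*(m:ℤ) - (k-1:ℕ)) * j₂) * ((Real.cos (2 * Real.pi * (j₂:ℝ) / k) : ℝ) : ℂ))))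
        = (1/2^(k-1) : ℂ) * ((Nat.choose (k-1) m : ℂ)
            * (∑ j₁ ∈ Finset.range k, ze k ((2*(m:ℤ) - (k-1:ℕ)) * j₁) * ((Real.cos (2 * Real.pi * (j₁:ℝ) / k) : ℝ) : ℂ))
            * (∑ j₂ ∈ Finset.range k, ze k (-(2*(m:ℤ) - (k-1:ℕ)) * j₂) * ((Real.cos (2 * Real.pi * (j₂:ℝ) / k) : ℝ) : ℂ))) := by
      intro m _
      rw [mul_assoc, Finset.sum_mul_sum]
      simp only [Finset.mul_sum]
      exact Finset.sum_congr rfl fun j₁ _ => Finset.sum_congr rfl fun j₂ _ => by ring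
    rw [Finset.sum_congr rfl factor]
    have evalm : ∀ m ∈ Finset.range (k-1+1),
        (1/2^(k-1) : ℂ) * ((Nat.choose (k-1) m : ℂ)
            * (∑ j₁ ∈ Finset.range k, ze k ((2*(m:ℤ) - (k-1:ℕ)) * j₁) * ((Real.cos (2 * Real.pi * (j₁:ℝ) / k) : ℝ) : ℂ))
            * (∑ j₂ ∈ Finset.range k, ze k (-(2*(m:ℤ) - (k-1:ℕ)) * j₂) * ((Real.cos (2 * Real.pi * (j₂:ℝ) / k) : ℝ) : ℂ)))
        = (1/2^(k-1) : ℂ) * ((k:ℂ)^2/4) *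
            ((Nat.choose (k-1) m : ℂ) * (if m = 0 ∨ m = k - 1 ∨ 2*m = k ∨ 2*m + 2 = k then 1 else 0)) := by
      intro m hm
      have hmk : m < k := by rw [hn1] at hm; exact Finset.mem_range.mp hm
      have hcast : ((k-1:ℕ):ℤ) = (k:ℤ) - 1 := by omega
      rw [S1 k hk0, S1 k hk0, hcast, mul_assoc ((Nat.choose (k-1) m : ℂ))]
      rw [keval k hk m hmk]
      ring
    rw [Finset.sum_congr rfl evalm, ← Finset.mul_sum, hn1, sum_ind k hk]
  -- back to ℝ
  by_cases ho : Odd k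
  · rw [if_pos ho]
    rw [if_pos ho] at main
    have hr : (∑ j₁ ∈ Finset.range k, ∑ j₂ ∈ Finset.range k,
        (Real.cos (2 * Real.pi * ((j₁:ℝ) - (j₂:ℝ)) / k)) ^ (k-1) *
          Real.cos (2 * Real.pi * j₁ / k) * Real.cos (2 * Real.pi * j₂ / k))
        = (1/2^(k-1)) * ((k:ℝ)^2/4) * 2 := by
      apply Complex.ofReal_injective
      rw [main]; push_cast; ring
    rw [hr]
    have h2 : (2:ℝ)^k = 2^(k-1) * 2 := by
      rw [← pow_succ, hn1]
    rw [h2]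
    have hkne : (k:ℝ) ≠ 0 := by positivity
    field_simp
    ring
  · rw [if_neg ho]
    rw [if_neg ho] at main
    have hr : (∑ j₁ ∈ Finset.range k, ∑ j₂ ∈ Finset.range k,
        (Real.cos (2 * Real.pi * ((j₁:ℝ) - (j₂:ℝ)) / k)) ^ (k-1) *
          Real.cos (2 * Real.pi * j₁ / k) * Real.cos (2 * Real.pi * j₂ / k))
        = (1/2^(k-1)) * ((k:ℝ)^2/4) *
            (2 + (Nat.choose (k-1) (k/2) : ℝ) + (Nat.choose (k-1) (k/2-1) : ℝ)) := by
      apply Complex.ofReal_injective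
      rw [main]; push_cast; ring
    rw [hr]
    have h2 : (2:ℝ)^(k+1) = 2^(k-1) * 4 := by
      rw [show k + 1 = (k-1) + 2 by omega, pow_add]; norm_num
    rw [h2]
    have hkne : (k:ℝ) ≠ 0 := by positivity
    field_simp
end

section
/- Let α be an even positive integer and M_α the tensor with entries (M_α)_{j₁,…,j_α} = (1/α!)·Σ_{σ∈S_α} Π_{k=1}^{α/2} δ_{j_{σ(2k-1)}, j_{σ(2k)}} with indices in {1,2,3}. Then the squared Frobenius norm ‖M_α‖² = Σ_{j₁,…,j_α} (M_α)²_{j₁,…,j_α} equals α + 1. -/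
/-!
`M_α` is the symmetrization `S P` of the product `P` of the Kronecker deltas over the pairs
`{2k, 2k+1}`. Since `S P` is invariant under permuting positions, `‖S P‖² = ∑ⱼ S P j * P j`, and
`P` is the indicator of the doubled words `p₁p₁p₂p₂⋯pₘpₘ`, so `‖M_α‖² = ∑ₚ S P (doubled p)`.
A permutation maps `doubled p` to a doubled word exactly when it lands on `doubled q` with `q`
having the same colour counts `a` as `p`; counting these permutations gives
`S P (doubled p) = (m! / ∏ a_c!) · ∏ (2 a_c)! / (2m)!`, and grouping the `p` by their colour counts
turns the sum into `∑_{a₁+a₂+a₃=m} ∏ C(2a_c, a_c) / C(2m, m)`. As `C(2a, a) = (-4)^a C(-1/2, a)`,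
Vandermonde's identity evaluates the numerator to `(-4)^m C(-3/2, m) = (2m+1) C(2m, m)`.
-/

/-- The invariant symmetric tensor `M_α` for `α = 2*m`. -/
noncomputable def Msymm (m : ℕ) : (Fin (2 * m) → Fin 3) → ℝ := fun j =>
  (1 / (Nat.factorial (2 * m) : ℝ)) *
    ∑ σ : Equiv.Perm (Fin (2 * m)), ∏ k : Fin m,
      if j (σ ⟨2 * (k : ℕ), by have := k.isLt; omega⟩) =
          j (σ ⟨2 * (k : ℕ) + 1, by have := k.isLt; omega⟩) then (1 : ℝ) else 0

open Finset Equiv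

section BinomialRing

variable {R : Type*} [CommRing R] [BinomialRing R]

theorem Ring.succ_mul_choose_succ (r : R) (k : ℕ) :
    (k + 1 : R) * Ring.choose r (k + 1) = Ring.choose r k * (r - k) := by
  simpa [Nat.choose_succ_self_right] using Ring.choose_smul_choose r (Nat.le_succ k)

theorem Ring.sum_piAntidiag_prod_choose {ι : Type*} [DecidableEq ι] (s : Finset ι) (r : ι → R)
    (n : ℕ) :
    ∑ a ∈ s.piAntidiag n, ∏ i ∈ s, Ring.choose (r i) (a i) = Ring.choose (∑ i ∈ s, r i) n := by
  induction s using Finset.cons_induction generalizing n with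
  | empty => cases n <;> simp
  | cons i s hi ih =>
    rw [piAntidiag_cons, sum_disjiUnion, sum_cons, Ring.add_choose_eq _ (Commute.all _ _)]
    refine sum_congr rfl fun p _ => ?_
    rw [sum_map, ← ih, mul_sum]
    refine sum_congr rfl fun a ha => ?_
    have hai : a i = 0 := by
      by_contra h
      exact hi ((mem_piAntidiag.1 ha).2 i h)
    rw [prod_cons]
    simp only [addRightEmbedding_apply, Pi.add_apply, if_pos, hai, zero_add]
    congr 1
    refine prod_congr rfl fun j hj => ?_
    rw [if_neg (by rintro rfl; exact hi hj), add_zero]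

end BinomialRing

theorem Nat.centralBinom_mul_factorial_mul_factorial (n : ℕ) :
    n.centralBinom * n.factorial * n.factorial = (2 * n).factorial := by
  simpa [two_mul, Nat.centralBinom_eq_two_mul_choose] using
    Nat.choose_mul_factorial_mul_factorial (Nat.le_add_left n n)

section CentralBinom

variable {K : Type*} [Field K] [CharZero K]

theorem Ring.neg_four_pow_mul_choose_neg_one_half (n : ℕ) :
    (-4) ^ n * Ring.choose (-1 / 2 : K) n = n.centralBinom := by
  induction n with
  | zero => simp
  | succ n ih =>
    have hcb : ((n + 1 : ℕ) : K) * (n + 1).centralBinom = 2 * (2 * n + 1) * n.centralBinom := by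
      exact_mod_cast Nat.succ_mul_centralBinom_succ n
    apply mul_left_cancel₀ (Nat.cast_ne_zero.2 n.succ_ne_zero : ((n + 1 : ℕ) : K) ≠ 0)
    rw [Nat.cast_succ, mul_left_comm, Ring.succ_mul_choose_succ]
    push_cast at hcb ⊢
    linear_combination (-4) * (-1 / 2 - n : K) * ih - hcb

theorem Ring.neg_four_pow_mul_choose_neg_three_halves (n : ℕ) :
    (-4) ^ n * Ring.choose (-3 / 2 : K) n = (2 * n + 1) * n.centralBinom := by
  induction n with
  | zero => simp
  | succ n ih =>
    have hcb : ((n + 1 : ℕ) : K) * (n + 1).centralBinom = 2 * (2 * n + 1) * n.centralBinom := by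
      exact_mod_cast Nat.succ_mul_centralBinom_succ n
    apply mul_left_cancel₀ (Nat.cast_ne_zero.2 n.succ_ne_zero : ((n + 1 : ℕ) : K) ≠ 0)
    rw [Nat.cast_succ, mul_left_comm, Ring.succ_mul_choose_succ]
    push_cast at hcb ⊢
    linear_combination (-4) * (-3 / 2 - n : K) * ih - (2 * n + 3 : K) * hcb

theorem sum_piAntidiag_prod_centralBinom {ι : Type*} [DecidableEq ι] (s : Finset ι) (n : ℕ) :
    ∑ a ∈ s.piAntidiag n, ∏ i ∈ s, ((a i).centralBinom : K) =
      (-4) ^ n * Ring.choose (-(#s : K) / 2) n := by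
  have hprod : ∀ a ∈ s.piAntidiag n, ∏ i ∈ s, ((a i).centralBinom : K) =
      (-4) ^ n * ∏ i ∈ s, Ring.choose (-1 / 2 : K) (a i) := fun a ha => by
    simp_rw [← Ring.neg_four_pow_mul_choose_neg_one_half, prod_mul_distrib, prod_pow_eq_pow_sum,
      (mem_piAntidiag.1 ha).1]
  rw [sum_congr rfl hprod, ← mul_sum, Ring.sum_piAntidiag_prod_choose, sum_const, nsmul_eq_mul]
  ring_nf

end CentralBinom

theorem Finset.sum_div_card_fiber {α γ K : Type*} [Fintype α] [DecidableEq γ] [Semifield K]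
    [CharZero K] (f : α → γ) (g : γ → K) :
    ∑ x, g (f x) / #{y | f y = f x} = ∑ c ∈ univ.image f, g c := by
  rw [sum_comp (fun c => g c / #{y | f y = c}) f]
  refine sum_congr rfl fun c hc => ?_
  obtain ⟨x, -, rfl⟩ := mem_image.1 hc
  have hx : (#{y | f y = f x} : K) ≠ 0 :=
    Nat.cast_ne_zero.2 (card_ne_zero_of_mem (mem_filter.2 ⟨mem_univ x, rfl⟩))
  rw [nsmul_eq_mul, mul_div_cancel₀ _ hx]

section FiberCard

variable {α ι : Type*} [Fintype α] [DecidableEq ι]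

def fiberCard (f : α → ι) (i : ι) : ℕ := #{a | f a = i}

theorem fiberCard_eq_card_subtype (f : α → ι) (i : ι) :
    fiberCard f i = Fintype.card {a // f a = i} :=
  (Fintype.card_subtype _).symm

theorem sum_fiberCard [Fintype ι] (f : α → ι) : ∑ i, fiberCard f i = Fintype.card α :=
  (card_eq_sum_card_fiberwise fun a _ => mem_univ (f a)).symm

theorem fiberCard_comp_perm (f : α → ι) (σ : Perm α) : fiberCard (f ∘ σ) = fiberCard f := by
  funext i
  simp only [fiberCard_eq_card_subtype]
  exact Fintype.card_congr (σ.subtypeEquiv fun _ => Iff.rfl)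

theorem exists_perm_comp_eq_of_fiberCard_eq {f g : α → ι} (h : fiberCard f = fiberCard g) :
    ∃ σ : Perm α, f ∘ σ = g := by
  have e : ∀ i, {a // g a = i} ≃ {a // f a = i} := fun i =>
    Fintype.equivOfCardEq (by simp only [← fiberCard_eq_card_subtype, h])
  refine ⟨(sigmaFiberEquiv g).symm.trans ((sigmaCongrRight e).trans (sigmaFiberEquiv f)), ?_⟩
  funext a
  exact (e (g a) ⟨a, rfl⟩).2

theorem exists_fiberCard_eq [Fintype ι] (n : ι → ℕ) (hn : ∑ i, n i = Fintype.card α) :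
    ∃ f : α → ι, fiberCard f = n := by
  have e : α ≃ Σ i, Fin (n i) := Fintype.equivOfCardEq (by simp [hn])
  refine ⟨fun a => (e a).1, funext fun i => ?_⟩
  rw [fiberCard_eq_card_subtype,
    Fintype.card_congr (e.subtypeEquiv (q := fun x => x.1 = i) fun _ => Iff.rfl),
    Fintype.card_congr (sigmaSubtype i), Fintype.card_fin]

variable [DecidableEq α]

theorem image_fiberCard [Fintype ι] :
    univ.image (fiberCard : (α → ι) → ι → ℕ) = piAntidiag univ (Fintype.card α) := by
  ext n
  simp only [mem_image, mem_univ, true_and, mem_piAntidiag, ne_eq, implies_true, and_true]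
  exact ⟨fun ⟨f, hf⟩ => hf ▸ sum_fiberCard f, exists_fiberCard_eq n⟩

theorem card_perm_comp_eq [Fintype ι] (f g : α → ι) :
    #{σ : Perm α | f ∘ σ = g} =
      if fiberCard f = fiberCard g then ∏ i, (fiberCard f i).factorial else 0 := by
  split_ifs with h
  · obtain ⟨τ, rfl⟩ := exists_perm_comp_eq_of_fiberCard_eq h
    have hstab : #{σ : Perm α | f ∘ σ = f ∘ τ} = #{σ : Perm α | f ∘ σ = f} :=
      card_equiv (Equiv.mulRight τ⁻¹) fun σ => by
        simpa [funext_iff] using τ.forall_congr fun x => by simp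
    rw [hstab, ← Fintype.card_subtype, DomMulAct.stabilizer_card]
    simp only [fiberCard_eq_card_subtype]
  · rw [card_eq_zero, filter_eq_empty_iff]
    rintro σ - rfl
    exact h (fiberCard_comp_perm f σ).symm

theorem card_fiberCard_eq_mul_prod_factorial [Fintype ι] (f : α → ι) :
    #{g : α → ι | fiberCard g = fiberCard f} * ∏ i, (fiberCard f i).factorial =
      (Fintype.card α).factorial := by
  rw [← Fintype.card_perm, ← card_univ, card_eq_sum_card_fiberwise
    (f := fun σ : Perm α => f ∘ σ) (s := univ) (t := univ) fun _ _ => mem_univ _]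
  simp only [card_perm_comp_eq, sum_ite, sum_const_zero, add_zero, sum_const, smul_eq_mul,
    eq_comm (a := fiberCard f)]

end FiberCard

section Symmetrize

variable {α β : Type*} [Fintype α] [DecidableEq α]

noncomputable def symmetrize (P : (α → β) → ℝ) (j : α → β) : ℝ :=
  ((Fintype.card α).factorial : ℝ)⁻¹ * ∑ σ : Perm α, P (j ∘ σ)

theorem symmetrize_comp_perm (P : (α → β) → ℝ) (j : α → β) (τ : Perm α) :
    symmetrize P (j ∘ τ) = symmetrize P j := by
  unfold symmetrize
  congr 1
  exact Fintype.sum_equiv (Equiv.mulLeft τ) _ _ fun σ => rfl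

theorem sum_symmetrize_sq [Fintype β] [DecidableEq β] (P : (α → β) → ℝ) :
    ∑ j, symmetrize P j ^ 2 = ∑ j, symmetrize P j * P j := by
  have hσ : ∀ σ : Perm α, ∑ j, symmetrize P j * P (j ∘ σ) = ∑ j, symmetrize P j * P j :=
    fun σ => Fintype.sum_equiv (σ.arrowCongr (Equiv.refl β)).symm _ _ fun j => by
      simp [Equiv.arrowCongr, Function.comp_def, ← symmetrize_comp_perm P j σ]
  calc ∑ j, symmetrize P j ^ 2
      = ∑ j, symmetrize P j * (((Fintype.card α).factorial : ℝ)⁻¹ * ∑ σ : Perm α, P (j ∘ σ)) := by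
        simp only [sq]; rfl
    _ = ((Fintype.card α).factorial : ℝ)⁻¹ * ∑ σ : Perm α, ∑ j, symmetrize P j * P (j ∘ σ) := by
        simp only [mul_sum, mul_left_comm _ (((Fintype.card α).factorial : ℝ)⁻¹)]
        exact sum_comm
    _ = ∑ j, symmetrize P j * P j := by
        simp only [hσ, sum_const, card_univ, Fintype.card_perm, nsmul_eq_mul]
        field_simp

end Symmetrize

section Pairing

variable {β : Type*} {m : ℕ}

def doubled (p : Fin m → β) : Fin (2 * m) → β := fun x => p ⟨x / 2, by omega⟩

noncomputable def pairDelta [DecidableEq β] (j : Fin (2 * m) → β) : ℝ :=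
  ∏ k : Fin m, if j ⟨2 * k, by omega⟩ = j ⟨2 * k + 1, by omega⟩ then 1 else 0

theorem doubled_apply_two_mul (p : Fin m → β) (k : Fin m) :
    doubled p ⟨2 * k, by omega⟩ = p k := by
  simp [doubled]

theorem doubled_apply_two_mul_add_one (p : Fin m → β) (k : Fin m) :
    doubled p ⟨2 * k + 1, by omega⟩ = p k := by
  simp only [doubled]
  congr
  omega

theorem doubled_injective : Function.Injective (doubled (β := β) (m := m)) :=
  fun p q h => funext fun k => by rw [← doubled_apply_two_mul p k, h, doubled_apply_two_mul]

theorem fiberCard_doubled [DecidableEq β] (p : Fin m → β) :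
    fiberCard (doubled p) = fun c => 2 * fiberCard p c := by
  funext c
  let half : Fin (2 * m) → Fin m := fun x => ⟨x / 2, by omega⟩
  have hfiber : ∀ k, #{x | half x = k} = 2 := fun k => by
    rw [card_eq_two]
    refine ⟨⟨2 * k, by omega⟩, ⟨2 * k + 1, by omega⟩, by simp [Fin.ext_iff], ?_⟩
    ext x
    simp only [half, mem_filter, mem_univ, true_and, mem_insert, mem_singleton, Fin.ext_iff]
    omega
  calc fiberCard (doubled p) c
      = ∑ k, ∑ x with half x = k, if p k = c then 1 else 0 := by
        rw [fiberCard, card_filter, ← sum_fiberwise univ half]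
        exact sum_congr rfl fun k _ => sum_congr rfl fun x hx => by
          rw [← (mem_filter.1 hx).2]; rfl
    _ = 2 * fiberCard p c := by
        simp only [sum_const, hfiber, smul_eq_mul, ← mul_sum, fiberCard, card_filter]

variable [Fintype β] [DecidableEq β]

theorem pairDelta_eq_sum (j : Fin (2 * m) → β) :
    pairDelta j = ∑ p, if doubled p = j then 1 else 0 := by
  by_cases h : ∀ k : Fin m, j ⟨2 * k, by omega⟩ = j ⟨2 * k + 1, by omega⟩
  · have hj : doubled (fun k => j ⟨2 * k, by omega⟩) = j := funext fun x => by
      obtain ⟨k, rfl | rfl⟩ : ∃ k : Fin m, x = ⟨2 * k, by omega⟩ ∨ x = ⟨2 * k + 1, by omega⟩ :=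
        ⟨⟨x / 2, by omega⟩, by simp only [Fin.ext_iff]; omega⟩
      · exact doubled_apply_two_mul _ k
      · rw [doubled_apply_two_mul_add_one, h]
    rw [← hj]
    simp [pairDelta, doubled_injective.eq_iff, doubled_apply_two_mul, doubled_apply_two_mul_add_one]
  · push Not at h
    obtain ⟨k, hk⟩ := h
    rw [pairDelta, prod_eq_zero (mem_univ k) (if_neg hk), eq_comm]
    refine sum_eq_zero fun p _ => if_neg ?_
    rintro rfl
    exact hk (by rw [doubled_apply_two_mul, doubled_apply_two_mul_add_one])

theorem sum_mul_pairDelta (F : (Fin (2 * m) → β) → ℝ) :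
    ∑ j, F j * pairDelta j = ∑ p, F (doubled p) := by
  simp only [pairDelta_eq_sum, mul_sum, mul_ite, mul_one, mul_zero]
  rw [sum_comm]
  simp

theorem symmetrize_pairDelta_doubled (p : Fin m → β) :
    symmetrize (pairDelta (m := m)) (doubled p) =
      #{q : Fin m → β | fiberCard q = fiberCard p} * (∏ c, ((2 * fiberCard p c).factorial : ℝ)) /
        (2 * m).factorial := by
  simp only [symmetrize, pairDelta_eq_sum]
  rw [sum_comm]
  simp only [sum_boole, eq_comm (a := doubled _), card_perm_comp_eq, fiberCard_doubled]
  have hcancel : ∀ q : Fin m → β,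
      ((fun c => 2 * fiberCard p c) = fun c => 2 * fiberCard q c) ↔ fiberCard q = fiberCard p := by
    simp [funext_iff, eq_comm]
  simp only [hcancel, Nat.cast_ite, Nat.cast_zero, sum_ite, sum_const_zero, add_zero, sum_const,
    nsmul_eq_mul, Fintype.card_fin, Nat.cast_prod]
  ring

theorem symmetrize_pairDelta_doubled_mul_card (p : Fin m → β) :
    symmetrize (pairDelta (m := m)) (doubled p) * #{q : Fin m → β | fiberCard q = fiberCard p} =
      (∏ c, ((fiberCard p c).centralBinom : ℝ)) / m.centralBinom := by
  have horbit : (#{q : Fin m → β | fiberCard q = fiberCard p} : ℝ) *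
      ∏ c, ((fiberCard p c).factorial : ℝ) = m.factorial := by
    exact_mod_cast Fintype.card_fin m ▸ card_fiberCard_eq_mul_prod_factorial p
  set N : ℝ := (#{q : Fin m → β | fiberCard q = fiberCard p} : ℝ)
  have hfac (n : ℕ) : ((2 * n).factorial : ℝ) = n.centralBinom * n.factorial * n.factorial := by
    exact_mod_cast (Nat.centralBinom_mul_factorial_mul_factorial n).symm
  have := m.centralBinom_ne_zero
  have := m.factorial_ne_zero
  calc symmetrize pairDelta (doubled p) * N
      = (N * ∏ c, ((fiberCard p c).factorial : ℝ)) ^ 2 *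
          (∏ c, ((fiberCard p c).centralBinom : ℝ)) /
          (m.centralBinom * m.factorial * m.factorial) := by
        simp only [symmetrize_pairDelta_doubled, hfac, prod_mul_distrib]
        ring
    _ = (∏ c, ((fiberCard p c).centralBinom : ℝ)) / m.centralBinom := by
        rw [horbit]
        field_simp

theorem sum_symmetrize_pairDelta_sq :
    ∑ j, symmetrize (pairDelta (β := β) (m := m)) j ^ 2 =
      (-4) ^ m * Ring.choose (-(Fintype.card β : ℝ) / 2) m / m.centralBinom := by
  have hterm (p : Fin m → β) : symmetrize pairDelta (doubled p) =
      (∏ c, ((fiberCard p c).centralBinom : ℝ)) / m.centralBinom /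
        #{q : Fin m → β | fiberCard q = fiberCard p} := by
    rw [← symmetrize_pairDelta_doubled_mul_card, mul_div_cancel_right₀]
    exact Nat.cast_ne_zero.2 (card_ne_zero_of_mem (mem_filter.2 ⟨mem_univ p, rfl⟩))
  rw [sum_symmetrize_sq, sum_mul_pairDelta]
  simp only [hterm, sum_div_card_fiber (fiberCard (α := Fin m))
    fun a => (∏ c, ((a c).centralBinom : ℝ)) / m.centralBinom]
  rw [image_fiberCard, ← sum_div, Fintype.card_fin, ← card_univ (α := β),
    sum_piAntidiag_prod_centralBinom]

end Pairing

theorem Msymm_sq_norm_general (m : ℕ) :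
    ∑ j : Fin (2 * m) → Fin 3, (Msymm m j) ^ 2 = 2 * m + 1 := by
  have hM : Msymm m = symmetrize pairDelta := by
    funext j
    simp [Msymm, symmetrize, pairDelta]
  rw [hM, sum_symmetrize_pairDelta_sq, Fintype.card_fin, Nat.cast_ofNat,
    Ring.neg_four_pow_mul_choose_neg_three_halves]
  have := m.centralBinom_ne_zero
  field_simp

/-- The squared Frobenius norm of `M_α` equals `α + 1` for even `α = 2*m`. -/
theorem Msymm_sq_norm (m : ℕ) (hm : 0 < m) :
    ∑ j : Fin (2 * m) → Fin 3, (Msymm m j) ^ 2 = 2 * m + 1 :=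
  Msymm_sq_norm_general m
end

section
/- Let u₁,…,uₙ, v₁,…,vₙ ∈ ℝ³ and set H = Σᵢ uᵢ vᵢᵀ with singular value decomposition H = U Σ Vᵀ where Σ has nonnegative decreasing diagonal. Then the rotation R* = V·diag(1,1,det(VUᵀ))·Uᵀ maximizes the functional R ↦ Σᵢ ⟨R uᵢ, vᵢ⟩ over R ∈ SO(3). -/
/-!
Writing `M = Vᵀ R U`, the objective at `R` is `∑ⱼ σⱼ Mⱼⱼ`, with `M` orthogonal and
`det M = det (V Uᵀ)`, while `R*` corresponds to `M = diag(1, 1, det (V Uᵀ))`. The diagonal entries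
of an orthogonal matrix are at most `1`, which settles the case `det M = 1`. If `det M = -1`, the
characteristic polynomial of `M` factors as `(l + 1)(l² - (tr M + 1) l + 1)`, so `tr M > 1` would
give a real eigenvalue `l > 1`, impossible for an isometry; with `tr M ≤ 1` and decreasing weights,
Abel summation gives `∑ⱼ σⱼ Mⱼⱼ ≤ σ₀ + σ₁ - σ₂`.
-/

open Matrix

namespace Matrix

section Orthogonal

variable {n : Type*} [Fintype n] [DecidableEq n]

lemma diag_le_one_of_mem_orthogonalGroup {M : Matrix n n ℝ} (hM : M ∈ orthogonalGroup n ℝ)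
    (i : n) : M i i ≤ 1 :=
  (le_abs_self _).trans (entry_norm_bound_of_unitary hM i i)

lemma det_mul_self_of_mem_orthogonalGroup {R : Type*} [CommRing R] {M : Matrix n n R}
    (hM : M ∈ orthogonalGroup n R) : M.det * M.det = 1 := by
  have h := congrArg det ((mem_orthogonalGroup_iff n R).1 hM)
  rwa [det_mul, det_transpose, det_one] at h

attribute [local instance] starRingOfComm in
lemma transpose_mem_orthogonalGroup {R : Type*} [CommRing R] {M : Matrix n n R}
    (hM : M ∈ orthogonalGroup n R) : Mᵀ ∈ orthogonalGroup n R :=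
  Unitary.star_mem hM

lemma diagonal_mem_orthogonalGroup {R : Type*} [CommRing R] {d : n → R}
    (hd : ∀ i, d i * d i = 1) : diagonal d ∈ orthogonalGroup n R := by
  rw [mem_orthogonalGroup_iff, diagonal_transpose, diagonal_mul_diagonal, funext hd, diagonal_one]

lemma adjugate_eq_neg_transpose {R : Type*} [CommRing R] {M : Matrix n n R}
    (hM : M ∈ orthogonalGroup n R) (hdet : M.det = -1) : adjugate M = -Mᵀ := by
  have h := congrArg (Mᵀ * ·) (mul_adjugate M)
  simpa [← Matrix.mul_assoc, (mem_orthogonalGroup_iff' n R).1 hM, hdet] using h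

lemma sq_eq_one_of_det_smul_one_sub_eq_zero {M : Matrix n n ℝ} (hM : M ∈ orthogonalGroup n ℝ)
    {l : ℝ} (hl : (l • (1 : Matrix n n ℝ) - M).det = 0) : l ^ 2 = 1 := by
  obtain ⟨x, hx0, hx⟩ := exists_mulVec_eq_zero_iff.2 hl
  have hMx : M *ᵥ x = l • x := by
    rw [sub_mulVec, smul_mulVec, one_mulVec, sub_eq_zero] at hx
    exact hx.symm
  have hnorm : (M *ᵥ x) ⬝ᵥ (M *ᵥ x) = x ⬝ᵥ x := by
    rw [dotProduct_mulVec, ← mulVec_transpose, mulVec_mulVec,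
      (mem_orthogonalGroup_iff' n ℝ).1 hM, one_mulVec]
  rw [hMx, dotProduct_smul, smul_dotProduct, smul_smul, smul_eq_mul] at hnorm
  have hxx : x ⬝ᵥ x ≠ 0 := fun h => hx0 (dotProduct_self_eq_zero.1 h)
  rw [sq]
  exact mul_right_cancel₀ hxx (hnorm.trans (one_mul _).symm)

end Orthogonal

lemma det_smul_one_sub_fin_three {R : Type*} [CommRing R] (M : Matrix (Fin 3) (Fin 3) R) (l : R) :
    (l • (1 : Matrix (Fin 3) (Fin 3) R) - M).det =
      l ^ 3 - M.trace * l ^ 2 + M.adjugate.trace * l - M.det := by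
  simp [det_fin_three, trace_fin_three, adjugate_fin_three]
  ring

lemma trace_le_one_of_det_eq_neg_one {M : Matrix (Fin 3) (Fin 3) ℝ}
    (hM : M ∈ orthogonalGroup (Fin 3) ℝ) (hdet : M.det = -1) : M.trace ≤ 1 := by
  by_contra! ht
  set t := M.trace
  set s := √((t + 1) ^ 2 - 4)
  have hs : s ^ 2 = (t + 1) ^ 2 - 4 := Real.sq_sqrt (by nlinarith)
  have hs0 : 0 ≤ s := Real.sqrt_nonneg _
  -- `l` is the larger root of `l ^ 2 - (t + 1) * l + 1`, a factor of the characteristic polynomial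
  set l := (t + 1 + s) / 2 with hl_def
  have hl : 1 < l := by rw [hl_def]; linarith
  have hchar : (l • (1 : Matrix (Fin 3) (Fin 3) ℝ) - M).det =
      (l + 1) * (l ^ 2 - (t + 1) * l + 1) := by
    rw [det_smul_one_sub_fin_three, adjugate_eq_neg_transpose hM hdet, trace_neg, trace_transpose,
      hdet]
    ring
  have hroot : l ^ 2 - (t + 1) * l + 1 = 0 := by
    rw [hl_def]; linear_combination hs / 4
  have hl2 : l ^ 2 = 1 := sq_eq_one_of_det_smul_one_sub_eq_zero hM (by rw [hchar, hroot, mul_zero])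
  nlinarith

lemma sum_mul_diag_le_of_mem_orthogonalGroup {M : Matrix (Fin 3) (Fin 3) ℝ}
    (hM : M ∈ orthogonalGroup (Fin 3) ℝ) {σ : Fin 3 → ℝ} (hσ : Antitone σ) (hσ₂ : 0 ≤ σ 2) :
    ∑ j, σ j * M j j ≤ σ 0 + σ 1 + M.det * σ 2 := by
  have hσ₁₀ : σ 1 ≤ σ 0 := hσ (by decide)
  have hσ₂₁ : σ 2 ≤ σ 1 := hσ (by decide)
  have h₀ := diag_le_one_of_mem_orthogonalGroup hM 0
  have h₁ := diag_le_one_of_mem_orthogonalGroup hM 1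
  have h₂ := diag_le_one_of_mem_orthogonalGroup hM 2
  rw [Fin.sum_univ_three]
  rcases mul_self_eq_one_iff.1 (det_mul_self_of_mem_orthogonalGroup hM) with hdet | hdet
  · rw [hdet]
    linarith [mul_le_mul_of_nonneg_left h₀ (by linarith : 0 ≤ σ 0),
      mul_le_mul_of_nonneg_left h₁ (by linarith : 0 ≤ σ 1), mul_le_mul_of_nonneg_left h₂ hσ₂]
  · have htr := trace_le_one_of_det_eq_neg_one hM hdet
    rw [trace_fin_three] at htr
    rw [hdet]
    -- Abel summation against the partial traces `M 0 0 ≤ 1`, `M 0 0 + M 1 1 ≤ 2`, `trace M ≤ 1`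
    linarith [mul_nonneg (sub_nonneg.2 hσ₁₀) (sub_nonneg.2 h₀),
      mul_nonneg (sub_nonneg.2 hσ₂₁) (by linarith : 0 ≤ 2 - (M 0 0 + M 1 1)),
      mul_nonneg hσ₂ (by linarith : 0 ≤ 1 - (M 0 0 + M 1 1 + M 2 2))]

lemma sum_dotProduct_mulVec_eq_sum_mul_diag {n ι : Type*} [Fintype n] [Fintype ι]
    [DecidableEq n] {u v : ι → n → ℝ} {U V : Matrix n n ℝ} {σ : n → ℝ}
    (hH : ∑ i, vecMulVec (u i) (v i) = U * diagonal σ * Vᵀ) (R : Matrix n n ℝ) :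
    ∑ i, (R *ᵥ u i) ⬝ᵥ v i = ∑ j, σ j * (Vᵀ * R * U) j j :=
  calc ∑ i, (R *ᵥ u i) ⬝ᵥ v i = trace (R * ∑ i, vecMulVec (u i) (v i)) := by
        simp [Finset.mul_sum, trace_sum, mul_vecMulVec]
    _ = trace (Vᵀ * R * U * diagonal σ) := by
        rw [hH, ← Matrix.mul_assoc, ← Matrix.mul_assoc, trace_mul_comm]
        simp only [Matrix.mul_assoc]
    _ = ∑ j, σ j * (Vᵀ * R * U) j j := by
        simp [trace, mul_diagonal, mul_comm]

end Matrix

/-- Kabsch algorithm: if `H = Σᵢ uᵢ vᵢᵀ` has singular value decomposition `H = U Σ Vᵀ`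
with nonnegative decreasing diagonal `Σ`, then `R* = V·diag(1,1,det(V Uᵀ))·Uᵀ` is a rotation
maximizing `R ↦ Σᵢ ⟨R uᵢ, vᵢ⟩` over `SO(3)`. -/
theorem kabsch (n : ℕ) (u v : Fin n → Fin 3 → ℝ)
    (U V : Matrix (Fin 3) (Fin 3) ℝ) (σd : Fin 3 → ℝ)
    (hU : U ∈ Matrix.orthogonalGroup (Fin 3) ℝ)
    (hV : V ∈ Matrix.orthogonalGroup (Fin 3) ℝ)
    (hσpos : ∀ i, 0 ≤ σd i)
    (hσmono : ∀ i j : Fin 3, i ≤ j → σd j ≤ σd i)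
    (hH : (∑ i, vecMulVec (u i) (v i)) = U * Matrix.diagonal σd * Vᵀ) :
    (V * Matrix.diagonal (fun i : Fin 3 => if (i : ℕ) = 2 then (V * Uᵀ).det else 1) * Uᵀ)
        ∈ Matrix.specialOrthogonalGroup (Fin 3) ℝ ∧
      ∀ R ∈ Matrix.specialOrthogonalGroup (Fin 3) ℝ,
        ∑ i, dotProduct (R.mulVec (u i)) (v i) ≤
          ∑ i, dotProduct
            ((V * Matrix.diagonal (fun i : Fin 3 => if (i : ℕ) = 2 then (V * Uᵀ).det else 1)
              * Uᵀ).mulVec (u i)) (v i) := by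
  set c := (V * Uᵀ).det with hc
  set D := diagonal fun i : Fin 3 => if (i : ℕ) = 2 then c else 1
  have hUt := transpose_mem_orthogonalGroup hU
  have hcc : c * c = 1 := det_mul_self_of_mem_orthogonalGroup (mul_mem hV hUt)
  have hD : D ∈ orthogonalGroup (Fin 3) ℝ :=
    diagonal_mem_orthogonalGroup fun i => by split_ifs <;> simp [hcc]
  have hVDU : Vᵀ * (V * D * Uᵀ) * U = D := by
    calc Vᵀ * (V * D * Uᵀ) * U = (Vᵀ * V) * D * (Uᵀ * U) := by simp only [Matrix.mul_assoc]
      _ = D := by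
        rw [(mem_orthogonalGroup_iff' _ ℝ).1 hV, (mem_orthogonalGroup_iff' _ ℝ).1 hU,
          Matrix.one_mul, Matrix.mul_one]
  refine ⟨mem_specialOrthogonalGroup_iff.2 ⟨mul_mem (mul_mem hV hD) hUt, ?_⟩, fun R hR => ?_⟩
  · have hDdet : D.det = c := by simp [D, det_diagonal, Fin.prod_univ_three]
    rw [det_mul, det_mul, hDdet, det_transpose, ← hcc, hc, det_mul, det_transpose]
    ring
  · obtain ⟨hRo, hRdet⟩ := mem_specialOrthogonalGroup_iff.1 hR
    have hM := mul_mem (mul_mem (transpose_mem_orthogonalGroup hV) hRo) hU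
    have hMdet : (Vᵀ * R * U).det = c := by
      rw [hc, det_mul, det_mul, det_mul, hRdet, det_transpose, det_transpose]; ring
    rw [sum_dotProduct_mulVec_eq_sum_mul_diag hH, sum_dotProduct_mulVec_eq_sum_mul_diag hH, hVDU]
    calc _ ≤ σd 0 + σd 1 + c * σd 2 :=
          hMdet ▸ sum_mul_diag_le_of_mem_orthogonalGroup hM (fun i j h => hσmono i j h) (hσpos 2)
      _ = _ := by simp [D, Fin.sum_univ_three, mul_comm]
end

section
/- Let v₁ = (1,1,1)/√3, v₂ = (-1,-1,1)/√3, v₃ = (-1,1,-1)/√3, v₄ = (1,-1,-1)/√3 and let s⁽¹⁾, s⁽²⁾, s⁽³⁾ be the standard skew-symmetric basis matrices (s⁽¹⁾e₂ = e₃, s⁽¹⁾e₃ = -e₂, etc.). Define B_ℓ = Σ_{j=1}^{4} Σ_{i=0}^{2} (⊗^i v_j) ⊗ (s^{(ℓ)}v_j) ⊗ (⊗^{2-i} v_j) as 3-tensors on ℝ³. Then ⟨B_{ℓ₁}, B_{ℓ₂}⟩ = (128/9)·δ_{ℓ₁ℓ₂} for ℓ₁, ℓ₂ ∈ {1,2,3},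 where ⟨·,·⟩ is the Frobenius inner product on 3-tensors. -/
open Matrix

/-- The four tetrahedral directions `(±1,±1,±1)/√3` (with an even number of minus signs). -/
noncomputable def tetraV : Fin 4 → Fin 3 → ℝ :=
  ![![1 / Real.sqrt 3, 1 / Real.sqrt 3, 1 / Real.sqrt 3],
    ![-(1 / Real.sqrt 3), -(1 / Real.sqrt 3), 1 / Real.sqrt 3],
    ![-(1 / Real.sqrt 3), 1 / Real.sqrt 3, -(1 / Real.sqrt 3)],
    ![1 / Real.sqrt 3, -(1 / Real.sqrt 3), -(1 / Real.sqrt 3)]]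

/-- The standard skew-symmetric basis matrices `s⁽¹⁾, s⁽²⁾, s⁽³⁾`. -/
def skewBasis : Fin 3 → Matrix (Fin 3) (Fin 3) ℝ :=
  ![!![0, 0, 0; 0, 0, -1; 0, 1, 0],
    !![0, 0, -1; 0, 0, 0; 1, 0, 0],
    !![0, -1, 0; 1, 0, 0; 0, 0, 0]]

/-- `B_ℓ = Σ_{j=1}^{4} Σ_{i=0}^{2} (⊗^i v_j) ⊗ (s⁽ℓ⁾v_j) ⊗ (⊗^{2-i} v_j)` as a 3-tensor. -/
noncomputable def tetraB (ℓ : Fin 3) : (Fin 3 → Fin 3) → ℝ := fun j =>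
  ∑ t : Fin 4, ∑ i : Fin 3, ∏ a : Fin 3,
    if a = i then ((skewBasis ℓ).mulVec (tetraV t)) (j a) else tetraV t (j a)

def intV : Fin 4 → Fin 3 → ℤ :=
  ![![1,1,1], ![-1,-1,1], ![-1,1,-1], ![1,-1,-1]]

def skewZ : Fin 3 → Matrix (Fin 3) (Fin 3) ℤ :=
  ![!![0, 0, 0; 0, 0, -1; 0, 1, 0],
    !![0, 0, -1; 0, 0, 0; 1, 0, 0],
    !![0, -1, 0; 1, 0, 0; 0, 0, 0]]

def tetraBZ (ℓ : Fin 3) : (Fin 3 → Fin 3) → ℤ := fun j =>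
  ∑ t : Fin 4, ∑ i : Fin 3, ∏ a : Fin 3,
    if a = i then ((skewZ ℓ).mulVec (intV t)) (j a) else intV t (j a)

lemma tetraV_eq (t : Fin 4) (k : Fin 3) : tetraV t k = (intV t k : ℝ) / Real.sqrt 3 := by
  fin_cases t <;> fin_cases k <;> norm_num [tetraV, intV, neg_div, one_div]

lemma mulVec_eq (ℓ : Fin 3) (t : Fin 4) (k : Fin 3) :
    (skewBasis ℓ).mulVec (tetraV t) k = ((skewZ ℓ).mulVec (intV t) k : ℝ) / Real.sqrt 3 := by
  fin_cases ℓ <;> fin_cases t <;> fin_cases k <;>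
    simp [skewBasis, skewZ, tetraV, intV, mulVec, dotProduct, Fin.sum_univ_succ] <;> ring

lemma tetraB_eq (ℓ : Fin 3) (j : Fin 3 → Fin 3) :
    tetraB ℓ j = (tetraBZ ℓ j : ℝ) / (3 * Real.sqrt 3) := by
  have h3 : Real.sqrt 3 ^ 3 = 3 * Real.sqrt 3 := by
    rw [pow_succ, pow_two, Real.mul_self_sqrt (by norm_num)]
  unfold tetraB tetraBZ
  push_cast
  rw [Finset.sum_div]
  refine Finset.sum_congr rfl fun t _ => ?_
  rw [Finset.sum_div]
  refine Finset.sum_congr rfl fun i _ => ?_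
  have : ∀ a : Fin 3,
      (if a = i then (skewBasis ℓ).mulVec (tetraV t) (j a) else tetraV t (j a)) =
      ((if a = i then ((skewZ ℓ).mulVec (intV t) (j a) : ℝ) else (intV t (j a) : ℝ))) / Real.sqrt 3 := by
    intro a; split <;> [exact mulVec_eq ℓ t (j a); exact tetraV_eq t (j a)]
  rw [Finset.prod_congr rfl fun a _ => this a, Finset.prod_div_distrib]
  congr 1
  rw [← h3]
  simp [Finset.prod_const, pow_succ]

lemma keyZ (ℓ₁ ℓ₂ : Fin 3) :
    ∑ j : Fin 3 → Fin 3, tetraBZ ℓ₁ j * tetraBZ ℓ₂ j =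
      if ℓ₁ = ℓ₂ then 384 else 0 := by
  fin_cases ℓ₁ <;> fin_cases ℓ₂ <;> decide

/-- The tangent tensors of the tetrahedral embedding are orthogonal with
`⟨B_{ℓ₁}, B_{ℓ₂}⟩ = (128/9)·δ_{ℓ₁ℓ₂}`. -/
theorem tetraB_inner (ℓ₁ ℓ₂ : Fin 3) :
    ∑ j : Fin 3 → Fin 3, tetraB ℓ₁ j * tetraB ℓ₂ j =
      if ℓ₁ = ℓ₂ then 128 / 9 else 0 := by
  have h3 : Real.sqrt 3 * Real.sqrt 3 = 3 := Real.mul_self_sqrt (by norm_num)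
  have : ∑ j : Fin 3 → Fin 3, tetraB ℓ₁ j * tetraB ℓ₂ j =
      ((∑ j : Fin 3 → Fin 3, tetraBZ ℓ₁ j * tetraBZ ℓ₂ j : ℤ) : ℝ) / 27 := by
    push_cast
    rw [Finset.sum_div]
    refine Finset.sum_congr rfl fun j _ => ?_
    rw [tetraB_eq, tetraB_eq, div_mul_div_comm]
    congr 1
    nlinarith [h3]
  rw [this, keyZ]
  split <;> norm_num
end
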